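/- For any ideal I of 𝔥_{M,∗} and z ∈ M, the modified addition formula S_z(x+y) = S_z(x) ∗ C_z(y) + C_z(x) ∗ S_z(y) holds in (𝔥_{M,∗}/I)⟦x,y⟧ if and only if the modified Pythagorean identity −w_{z,1} ∗ S_z(x)^{∗2} + C_z(x)^{∗2} = 1 holds in (𝔥_{M,∗}/I)⟦x⟧. -/

import Mathlib

open scoped BigOperators

/-- `𝔥_M`: the noncommutative polynomial ring `ℚ⟨e_z : z ∈ M⟩`, realized as the
monoid algebra of the free monoid on `M` over `ℚ` (concatenation product). -/
abbrev H (M : Type*) [MonoidWithZero M] : Type _ := MonoidAlgebra ℚ (FreeMonoid M)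

variable {M : Type*} [MonoidWithZero M]

/-- The word `e_{a_1} ⋯ e_{a_k}` as an element of `𝔥_M`. -/
noncomputable def wrd (l : List M) : H M := MonoidAlgebra.single (FreeMonoid.ofList l) 1

/-- The generator `e_z`. -/
noncomputable def e (z : M) : H M := wrd [z]

/-- The harmonic product on words, defined by the recursion
`e_a w ∗ e_b w' = e_{ab}(w ∗ e_b w' + e_a w ∗ w' − e_0 (w ∗ w'))`. -/
noncomputable def har : List M → List M → H M
  | [], w => wrd w
  | a :: w, [] => wrd (a :: w)
  | a :: w, b :: w' =>
      wrd [a * b] * (har w (b :: w') + har (a :: w) w' - wrd [0] * har w w')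
termination_by w w' => w.length + w'.length
decreasing_by all_goals (simp; try omega)

/-- The harmonic product `∗` on `𝔥_M`, extended ℚ-bilinearly from words. -/
noncomputable def hmul (f g : H M) : H M :=
  Finsupp.sum f.coeff fun w a => Finsupp.sum g.coeff fun w' b =>
    (a * b) • har (FreeMonoid.toList w) (FreeMonoid.toList w')

/-- Powers with respect to the harmonic product. -/
noncomputable def hpow (a : H M) : ℕ → H M
  | 0 => 1
  | n + 1 => hmul a (hpow a n)

/-- `s_{z,k} = e_z e_0^{k-1}` (concatenation product). -/
noncomputable def s (z : M) (k : ℕ) : H M := e z * (e 0) ^ (k - 1)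

/-- `sprod z k n = s_{z^n,k} s_{z^{n-1},k} ⋯ s_{z,k}` (concatenation), `sprod z k 0 = 1`. -/
noncomputable def sprod (z : M) (k : ℕ) : ℕ → H M
  | 0 => 1
  | n + 1 => s (z ^ (n + 1)) k * sprod z k n

/-- Cauchy product of power series over `(𝔥_M, ∗)`, represented as coefficient sequences. -/
noncomputable def hmulPS (f g : ℕ → H M) : ℕ → H M :=
  fun n => ∑ i ∈ Finset.range (n + 1), hmul (f i) (g (n - i))

/-- Powers of a power series w.r.t. the harmonic product. -/
noncomputable def psPow (f : ℕ → H M) : ℕ → (ℕ → H M)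
  | 0 => fun n => if n = 0 then 1 else 0
  | m + 1 => hmulPS f (psPow f m)

/-- `exp_∗` of a power series with zero constant term (coefficientwise). -/
noncomputable def expPS (f : ℕ → H M) : ℕ → H M :=
  fun n => ∑ m ∈ Finset.range (n + 1), ((Nat.factorial m : ℚ))⁻¹ • psPow f m n

/-- Coefficients of the formal sine `S_z(x) = Σ_{n≥0} s_{z^n,2}⋯s_{z,2} x^{2n+1}`. -/
noncomputable def Scoef (z : M) (d : ℕ) : H M :=
  if d % 2 = 1 then sprod z 2 (d / 2) else 0

/-- Coefficients of the formal cosine `C_z(x) = S_z'(x)`. -/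
noncomputable def Ccoef (z : M) (d : ℕ) : H M := ((d : ℚ) + 1) • Scoef z (d + 1)

/-- `w_{z,n} = (2n+1)! s_{z^n,2} ⋯ s_{z,2}`. -/
noncomputable def wz (z : M) (n : ℕ) : H M := ((Nat.factorial (2 * n + 1) : ℚ)) • sprod z 2 n

/-- `g_{z,m,n} = w_{z,m+n} − w_{z,m} ∗ w_{z,n}`. -/
noncomputable def gz (z : M) (m n : ℕ) : H M := wz z (m + n) - hmul (wz z m) (wz z n)

/-- Coefficient of `x^i y^j` in `A_z(x,y) = S_z(x+y) − S_z(x) ∗ C_z(y) − C_z(x) ∗ S_z(y)`. -/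
noncomputable def Acoef (z : M) (i j : ℕ) : H M :=
  (Nat.choose (i + j) i : ℚ) • Scoef z (i + j)
    - hmul (Scoef z i) (Ccoef z j) - hmul (Ccoef z i) (Scoef z j)

/-- Coefficient of `x^d` in `P_z(x) = −w_{z,1} ∗ S_z(x)^{∗2} + C_z(x)^{∗2}`. -/
noncomputable def Pcoef (z : M) (d : ℕ) : H M :=
  -(hmul (wz z 1) (hmulPS (Scoef z) (Scoef z) d)) + hmulPS (Ccoef z) (Ccoef z) d


/-- Coefficients of `S^T_{z,k}(x) = Σ_{n≥0} s_{z^n,k}⋯s_{z,k} x^{(n+1)k−1}`. -/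
noncomputable def STcoef (z : M) (k : ℕ) (d : ℕ) : H M :=
  if k ∣ (d + 1) then sprod z k ((d + 1) / k - 1) else 0

/-- Coefficients of the series `Σ_{n≥1} (s_{z^n,nk}/n) x^{nk}`. -/
noncomputable def gexp (z : M) (k : ℕ) (d : ℕ) : H M :=
  if d ≠ 0 ∧ k ∣ d then (((d / k : ℕ) : ℚ))⁻¹ • s (z ^ (d / k)) d else 0

/-- Coefficients of `S^R_{z,k}(x) = x^{k−1} exp_∗(Σ_{n≥1} (s_{z^n,nk}/n) x^{nk})`. -/
noncomputable def SRcoef (z : M) (k : ℕ) (d : ℕ) : H M :=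
  if k - 1 ≤ d then expPS (gexp z k) (d - (k - 1)) else 0

/-- Admissible words spanning `𝔥^0_M = ℚ ⊕ ⨁_{a≠0,1} 𝔥_M e_a ⊕ ⨁_{a≠0,b≠1} e_a 𝔥_M e_b`. -/
def adm0 (l : List M) : Prop :=
  l = [] ∨ ∃ h : l ≠ [],
    (l.getLast h ≠ 0 ∧ l.getLast h ≠ 1) ∨ (l.head h ≠ 0 ∧ l.getLast h ≠ 1)

/-- The subspace `𝔥^0_M`. -/
noncomputable def H0 (M : Type*) [MonoidWithZero M] : Submodule ℚ (H M) :=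
  Submodule.span ℚ {x | ∃ l : List M, adm0 l ∧ x = wrd l}

/-- Words spanning `𝔥^1_M = ⨁_{m≥0} 𝔥^0_M e_1^m`. -/
def adm1 (l : List M) : Prop :=
  ∃ (l₀ : List M) (m : ℕ), adm0 l₀ ∧ l = l₀ ++ List.replicate m 1

/-- The subspace `𝔥^1_M`. -/
noncomputable def H1 (M : Type*) [MonoidWithZero M] : Submodule ℚ (H M) :=
  Submodule.span ℚ {x | ∃ l : List M, adm1 l ∧ x = wrd l}

/-- `ℓ(w)`: the number of letters `e_a` of a word with `a ≠ 0`. -/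
noncomputable def lcount (l : List M) : ℕ :=
  l.countP fun a => @decide (a ≠ 0) (Classical.propDecidable _)

/-- `ℱ_d 𝔥^0_M`: span of admissible words `w` with `ℓ(w) ≤ d`. -/
noncomputable def F0 (M : Type*) [MonoidWithZero M] (d : ℕ) : Submodule ℚ (H M) :=
  Submodule.span ℚ {x | ∃ l : List M, adm0 l ∧ lcount l ≤ d ∧ x = wrd l}

/-- The ideal of `(𝔥_M, ∗)` generated by a set. -/
noncomputable def genIdeal (S : Set (H M)) : Submodule ℚ (H M) :=
  Submodule.span ℚ {x | ∃ a y, y ∈ S ∧ x = hmul a y}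

/-- The product on the polynomial ring `𝔥_{M,∗}[S,T]` (represented as
finitely supported coefficient families indexed by monomials `S^i T^j`). -/
noncomputable def polyMul2 (f g : (ℕ × ℕ) →₀ H M) : (ℕ × ℕ) →₀ H M :=
  Finsupp.sum f fun p a => Finsupp.sum g fun q b => Finsupp.single (p + q) (hmul a b)

/-- `φ : 𝔥^0_{M,∗}[S,T] → 𝔥_{M,∗}`, `Σ w_{ij} S^i T^j ↦ Σ w_{ij} ∗ e_0^{∗i} ∗ e_1^{∗j}`. -/
noncomputable def phi2 (f : (ℕ × ℕ) →₀ H M) : H M :=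
  Finsupp.sum f fun p a => hmul a (hmul (hpow (e 0) p.1) (hpow (e 1) p.2))

/-- The product on `𝔥_{M,∗}[S]`. -/
noncomputable def polyMul1 (f g : ℕ →₀ H M) : ℕ →₀ H M :=
  Finsupp.sum f fun p a => Finsupp.sum g fun q b => Finsupp.single (p + q) (hmul a b)

/-- `φ₁ : 𝔥^1_{M,∗}[S] → 𝔥_{M,∗}`, `Σ w_i S^i ↦ Σ w_i ∗ e_0^{∗i}`. -/
noncomputable def phi1 (f : ℕ →₀ H M) : H M :=
  Finsupp.sum f fun i a => hmul a (hpow (e 0) i)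


/-!
Both identities are equivalent to the differential equation `S_z'' = w_{z,1} ∗ S_z` modulo `I`.
Put `T = S_z'' − w_{z,1} ∗ S_z`. Differentiating gives `P_z' = 2 C_z ∗ T`, and since
`C_z(0) = 1` this lies in `I` iff `T` does; as `P_z(0) = 1`, that is the Pythagorean identity.
On the other side `(∂_y² − w_{z,1}) A_z(x, y) = T(x + y) − S_z(x) ∗ T'(y) − C_z(x) ∗ T(y)` with
`A_z(x, 0) = ∂_y A_z(x, 0) = 0`: setting `y = 0` recovers `T` from `A_z`, and conversely `T ≡ 0`
leaves `A_z` a solution of `f'' = w_{z,1} ∗ f` with zero initial data. These computations need `∗`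
to be associative and, on the words in the letters `z^n` and `0`, commutative.
-/

open Finset

lemma har_nil_left (w : List M) : har [] w = wrd w := by
  rw [har]

lemma har_nil_right (w : List M) : har w [] = wrd w := by
  cases w <;> rw [har]

lemma har_cons_cons (a b : M) (w w' : List M) :
    har (a :: w) (b :: w') =
      wrd [a * b] * (har w (b :: w') + har (a :: w) w' - wrd [0] * har w w') :=
  har.eq_3 a w b w'

lemma wrd_nil : wrd ([] : List M) = 1 := rfl

lemma wrd_cons (a : M) (w : List M) : wrd (a :: w) = wrd [a] * wrd w := by
  rw [wrd, wrd, wrd, MonoidAlgebra.single_mul_single, one_mul]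
  rfl

lemma single_eq_smul_wrd (w : FreeMonoid M) (b : ℚ) :
    (MonoidAlgebra.single w b : H M) = b • wrd (FreeMonoid.toList w) := by
  rw [wrd, FreeMonoid.ofList_toList, MonoidAlgebra.smul_single, smul_eq_mul, mul_one]

@[elab_as_elim]
lemma wrd_induction {p : H M → Prop} (f : H M) (zero : p 0)
    (add : ∀ f g, p f → p g → p (f + g)) (smul_wrd : ∀ (b : ℚ) (l : List M), p (b • wrd l)) :
    p f := by
  induction f using MonoidAlgebra.induction_linear with
  | zero => exact zero
  | add f g hf hg => exact add f g hf hg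
  | single w b => rw [single_eq_smul_wrd]; exact smul_wrd b _

lemma hmul_add_left (f₁ f₂ g : H M) : hmul (f₁ + f₂) g = hmul f₁ g + hmul f₂ g := by
  unfold hmul
  rw [MonoidAlgebra.coeff_add]
  apply Finsupp.sum_add_index' <;> intro w
  · simp
  · intro a₁ a₂
    rw [← Finsupp.sum_add]
    exact Finsupp.sum_congr fun w' _ => by rw [add_mul, add_smul]

lemma hmul_add_right (f g₁ g₂ : H M) : hmul f (g₁ + g₂) = hmul f g₁ + hmul f g₂ := by
  unfold hmul
  rw [← Finsupp.sum_add]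
  refine Finsupp.sum_congr fun w _ => ?_
  rw [MonoidAlgebra.coeff_add]
  apply Finsupp.sum_add_index' <;> intro w'
  · simp
  · intro b₁ b₂
    rw [mul_add, add_smul]

lemma hmul_smul_left (r : ℚ) (f g : H M) : hmul (r • f) g = r • hmul f g := by
  unfold hmul
  rw [MonoidAlgebra.coeff_smul, Finsupp.sum_smul_index' fun w => by simp, Finsupp.smul_sum]
  refine Finsupp.sum_congr fun w _ => ?_
  rw [Finsupp.smul_sum]
  exact Finsupp.sum_congr fun w' _ => by rw [smul_eq_mul, mul_assoc, mul_smul]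

lemma hmul_smul_right (r : ℚ) (f g : H M) : hmul f (r • g) = r • hmul f g := by
  unfold hmul
  rw [Finsupp.smul_sum]
  refine Finsupp.sum_congr fun w _ => ?_
  rw [MonoidAlgebra.coeff_smul, Finsupp.sum_smul_index' fun w' => by simp, Finsupp.smul_sum]
  exact Finsupp.sum_congr fun w' _ => by rw [smul_eq_mul, mul_left_comm, mul_smul]

noncomputable def hmulₗ : H M →ₗ[ℚ] H M →ₗ[ℚ] H M :=
  LinearMap.mk₂ ℚ hmul hmul_add_left hmul_smul_left hmul_add_right hmul_smul_right

lemma hmul_zero_left (g : H M) : hmul 0 g = 0 := LinearMap.map_zero₂ hmulₗ g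

lemma hmul_zero_right (f : H M) : hmul f 0 = 0 := (hmulₗ f).map_zero

lemma hmul_sub_left (f₁ f₂ g : H M) : hmul (f₁ - f₂) g = hmul f₁ g - hmul f₂ g :=
  LinearMap.map_sub₂ hmulₗ f₁ f₂ g

lemma hmul_sub_right (f g₁ g₂ : H M) : hmul f (g₁ - g₂) = hmul f g₁ - hmul f g₂ :=
  (hmulₗ f).map_sub g₁ g₂

lemma hmul_sum_right {ι : Type*} (f : H M) (s : Finset ι) (g : ι → H M) :
    hmul f (∑ i ∈ s, g i) = ∑ i ∈ s, hmul f (g i) :=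
  map_sum (hmulₗ f) g s

lemma hmul_wrd (l l' : List M) : hmul (wrd l) (wrd l') = har l l' := by
  simp [hmul, wrd]

lemma hmul_one_left (f : H M) : hmul 1 f = f := by
  induction f using wrd_induction with
  | zero => exact hmul_zero_right 1
  | add f g hf hg => rw [hmul_add_right, hf, hg]
  | smul_wrd b l => rw [hmul_smul_right, ← wrd_nil, hmul_wrd, har_nil_left]

lemma hmul_one_right (f : H M) : hmul f 1 = f := by
  induction f using wrd_induction with
  | zero => exact hmul_zero_left 1
  | add f g hf hg => rw [hmul_add_left, hf, hg]
  | smul_wrd b l => rw [hmul_smul_left, ← wrd_nil, hmul_wrd, har_nil_right]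

lemma hmul_letter_mul_letter_mul (a b : M) (f g : H M) :
    hmul (wrd [a] * f) (wrd [b] * g) =
      wrd [a * b] * (hmul f (wrd [b] * g) + hmul (wrd [a] * f) g - wrd [0] * hmul f g) := by
  induction f using wrd_induction with
  | zero => simp [hmul_zero_left]
  | add f₁ f₂ ih₁ ih₂ =>
    simp only [mul_add, hmul_add_left, ih₁, ih₂, mul_sub]
    abel
  | smul_wrd r u =>
    induction g using wrd_induction with
    | zero => simp [hmul_zero_right]
    | add g₁ g₂ ih₁ ih₂ =>
      simp only [mul_add, hmul_add_right, ih₁, ih₂, mul_sub]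
      abel
    | smul_wrd r' v =>
      simp only [mul_smul_comm, hmul_smul_left, hmul_smul_right, ← wrd_cons, hmul_wrd,
        har_cons_cons, mul_add, mul_sub, smul_add, smul_sub]

lemma har_assoc : ∀ l₁ l₂ l₃ : List M, hmul (har l₁ l₂) (wrd l₃) = hmul (wrd l₁) (har l₂ l₃)
  | [], l₂, l₃ => by rw [har_nil_left, hmul_wrd, wrd_nil, hmul_one_left]
  | a :: u, [], l₃ => by rw [har_nil_right, har_nil_left, hmul_wrd]
  | a :: u, b :: v, [] => by rw [wrd_nil, hmul_one_right, har_nil_right, hmul_wrd]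
  | a :: u, b :: v, c :: w => by
    have left (x : M) (f : H M) : hmul (wrd [x] * f) (wrd (c :: w)) = wrd [x * c] *
        (hmul f (wrd (c :: w)) + hmul (wrd [x] * f) (wrd w) - wrd [0] * hmul f (wrd w)) := by
      rw [wrd_cons c w, hmul_letter_mul_letter_mul, ← wrd_cons]
    have right (y : M) (g : H M) : hmul (wrd (a :: u)) (wrd [y] * g) = wrd [a * y] *
        (hmul (wrd u) (wrd [y] * g) + hmul (wrd (a :: u)) g - wrd [0] * hmul (wrd u) g) := by
      rw [wrd_cons a u, hmul_letter_mul_letter_mul, ← wrd_cons]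
    rw [har_cons_cons a b, left, ← har_cons_cons]
    simp only [hmul_add_left, hmul_sub_left]
    rw [left 0, zero_mul, har_assoc u (b :: v) (c :: w), har_assoc (a :: u) v (c :: w),
      har_assoc u v (c :: w), har_assoc (a :: u) (b :: v) w, har_assoc u (b :: v) w,
      har_assoc (a :: u) v w, har_assoc u v w,
      har_cons_cons b c, right, ← har_cons_cons]
    simp only [hmul_add_right, hmul_sub_right]
    rw [right 0, mul_zero, ← mul_assoc a b c]
    simp only [mul_add, mul_sub]
    abel
termination_by l₁ l₂ l₃ => l₁.length + l₂.length + l₃.length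

lemma hmul_assoc (f g h : H M) : hmul (hmul f g) h = hmul f (hmul g h) := by
  induction f using wrd_induction with
  | zero => simp only [hmul_zero_left]
  | add f₁ f₂ ih₁ ih₂ => simp only [hmul_add_left, ih₁, ih₂]
  | smul_wrd r l =>
    induction g using wrd_induction with
    | zero => simp only [hmul_zero_left, hmul_zero_right]
    | add g₁ g₂ ih₁ ih₂ => simp only [hmul_add_left, hmul_add_right, ih₁, ih₂]
    | smul_wrd r' l' =>
      induction h using wrd_induction with
      | zero => simp only [hmul_zero_right]
      | add h₁ h₂ ih₁ ih₂ => simp only [hmul_add_right, ih₁, ih₂]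
      | smul_wrd r'' l'' => simp only [hmul_smul_left, hmul_smul_right, hmul_wrd, har_assoc]

lemma har_comm (l l' : List M) (h : ∀ a ∈ l, ∀ b ∈ l', Commute a b) : har l l' = har l' l := by
  induction l, l' using har.induct with
  | case1 w => rw [har_nil_left, har_nil_right]
  | case2 a w => rw [har_nil_left, har_nil_right]
  | case3 a u b v ih₁ ih₂ ih₃ =>
    rw [har_cons_cons, har_cons_cons, (h a (by simp) b (by simp)).eq,
      ih₁ fun x hx y hy => h x (by simp [hx]) y hy, ih₂ fun x hx y hy => h x hx y (by simp [hy]),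
      ih₃ fun x hx y hy => h x (by simp [hx]) y (by simp [hy]), add_comm (har v _)]

noncomputable def wordSpan (S : Set M) : Submodule ℚ (H M) :=
  Submodule.span ℚ (wrd '' {l | ∀ a ∈ l, a ∈ S})

lemma wrd_mem_wordSpan {S : Set M} {l : List M} (h : ∀ a ∈ l, a ∈ S) : wrd l ∈ wordSpan S :=
  Submodule.subset_span ⟨l, h, rfl⟩

lemma wrd_singleton_mul_mem_wordSpan {S : Set M} {a : M} (ha : a ∈ S) {f : H M}
    (hf : f ∈ wordSpan S) : wrd [a] * f ∈ wordSpan S := by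
  induction hf using Submodule.span_induction with
  | mem _ hy =>
    obtain ⟨l, hl, rfl⟩ := hy
    rw [← wrd_cons]
    exact wrd_mem_wordSpan (by simpa [ha] using hl)
  | zero => rw [mul_zero]; exact zero_mem _
  | add f g _ _ hf hg => rw [mul_add]; exact add_mem hf hg
  | smul r f _ hf => rw [mul_smul_comm]; exact Submodule.smul_mem _ r hf

lemma hmul_comm_of_mem_wordSpan {S : Set M} (hS : ∀ a ∈ S, ∀ b ∈ S, Commute a b) {f g : H M}
    (hf : f ∈ wordSpan S) (hg : g ∈ wordSpan S) : hmul f g = hmul g f := by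
  induction hf, hg using Submodule.span_induction₂ with
  | mem_mem _ _ hx hy =>
    obtain ⟨l, hl, rfl⟩ := hx
    obtain ⟨l', hl', rfl⟩ := hy
    rw [hmul_wrd, hmul_wrd, har_comm l l' fun a ha b hb => hS a (hl a ha) b (hl' b hb)]
  | zero_left => rw [hmul_zero_left, hmul_zero_right]
  | zero_right => rw [hmul_zero_left, hmul_zero_right]
  | add_left _ _ _ _ _ _ h₁ h₂ => rw [hmul_add_left, hmul_add_right, h₁, h₂]
  | add_right _ _ _ _ _ _ h₁ h₂ => rw [hmul_add_left, hmul_add_right, h₁, h₂]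
  | smul_left _ _ _ _ _ h => rw [hmul_smul_left, hmul_smul_right, h]
  | smul_right _ _ _ _ _ h => rw [hmul_smul_left, hmul_smul_right, h]

lemma hmul_left_comm_of_mem_wordSpan {S : Set M} (hS : ∀ a ∈ S, ∀ b ∈ S, Commute a b)
    {f g : H M} (hf : f ∈ wordSpan S) (hg : g ∈ wordSpan S) (h : H M) :
    hmul f (hmul g h) = hmul g (hmul f h) := by
  rw [← hmul_assoc, hmul_comm_of_mem_wordSpan hS hf hg, hmul_assoc]

section SeqDeriv

variable {V : Type*} [AddCommGroup V] [Module ℚ V]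

noncomputable def seqDeriv : (ℕ → V) →ₗ[ℚ] ℕ → V where
  toFun f n := ((n : ℚ) + 1) • f (n + 1)
  map_add' f g := by ext n; simp [smul_add]
  map_smul' r f := by ext n; simp [smul_comm r]

lemma seqDeriv_apply (f : ℕ → V) (n : ℕ) : seqDeriv f n = ((n : ℚ) + 1) • f (n + 1) := rfl

lemma seqDeriv_apply_mem_iff (I : Submodule ℚ V) (f : ℕ → V) (n : ℕ) :
    seqDeriv f n ∈ I ↔ f (n + 1) ∈ I :=
  I.smul_mem_iff (by positivity)

/-- `∂_y` of `y ↦ F(x + y)`, read off at the coefficient of `xⁱ`. -/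
lemma seqDeriv_choose_smul_add (f : ℕ → V) (i : ℕ) :
    seqDeriv (fun j => ((i + j).choose i : ℚ) • f (i + j)) =
      fun j => ((i + j).choose i : ℚ) • seqDeriv f (i + j) := by
  ext j
  have h := Nat.choose_mul_succ_eq (i + j) i
  rw [show i + j + 1 - i = j + 1 by omega] at h
  simp only [seqDeriv_apply, smul_smul, ← add_assoc]
  congr 1
  rw [mul_comm]
  exact_mod_cast h.symm

end SeqDeriv

lemma seqDeriv_hmul_left (a : H M) (f : ℕ → H M) :
    seqDeriv (fun n => hmul a (f n)) = fun n => hmul a (seqDeriv f n) :=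
  funext fun n => (hmul_smul_right _ a (f (n + 1))).symm

lemma seqDeriv_hmulPS (f g : ℕ → H M) (n : ℕ) :
    seqDeriv (hmulPS f g) n = hmulPS (seqDeriv f) g n + hmulPS f (seqDeriv g) n := by
  have split : ∀ i ∈ range (n + 2), ((n : ℚ) + 1) • hmul (f i) (g (n + 1 - i)) =
      (i : ℚ) • hmul (f i) (g (n + 1 - i))
        + ((n + 1 - i : ℕ) : ℚ) • hmul (f i) (g (n + 1 - i)) := by
    intro i hi
    rw [← add_smul, Nat.cast_sub (by simp at hi; omega)]
    push_cast
    congr 1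
    ring
  rw [seqDeriv_apply, hmulPS, smul_sum, sum_congr rfl split, sum_add_distrib]
  congr 1
  · rw [sum_range_succ']
    simp only [CharP.cast_eq_zero, zero_smul, add_zero, hmulPS, seqDeriv_apply, hmul_smul_left,
      Nat.cast_add, Nat.cast_one, Nat.add_sub_add_right]
  · rw [sum_range_succ, Nat.sub_self, Nat.cast_zero, zero_smul, add_zero]
    refine sum_congr rfl fun i hi => ?_
    rw [seqDeriv_apply, hmul_smul_right, Nat.cast_sub (by simp at hi; omega),
      Nat.cast_sub (by simp at hi; omega), show n + 1 - i = n - i + 1 by simp at hi; omega]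
    push_cast
    congr 1
    ring

lemma hmulPS_comm {f g : ℕ → H M} (h : ∀ i j, hmul (f i) (g j) = hmul (g j) (f i)) :
    hmulPS f g = hmulPS g f := by
  ext n : 1
  rw [hmulPS, hmulPS, ← sum_range_reflect]
  refine sum_congr rfl fun i hi => ?_
  rw [h, show n + 1 - 1 - i = n - i by omega, Nat.sub_sub_self (by simp at hi; omega)]

lemma hmulPS_sub_right (f g₁ g₂ : ℕ → H M) :
    hmulPS f (g₁ - g₂) = hmulPS f g₁ - hmulPS f g₂ := by
  ext n : 1
  simp only [hmulPS, Pi.sub_apply, hmul_sub_right, sum_sub_distrib]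

lemma hmul_hmulPS {a : H M} {f : ℕ → H M} (h : ∀ i x, hmul a (hmul (f i) x) = hmul (f i) (hmul a x))
    (g : ℕ → H M) (n : ℕ) : hmul a (hmulPS f g n) = hmulPS f (fun j => hmul a (g j)) n := by
  simp only [hmulPS, hmul_sum_right, h]

lemma forall_hmulPS_mem_iff {I : Submodule ℚ (H M)} (hI : ∀ a b : H M, b ∈ I → hmul a b ∈ I)
    {c t : ℕ → H M} (hc : c 0 = 1) : (∀ n, hmulPS c t n ∈ I) ↔ ∀ n, t n ∈ I := by
  refine ⟨fun h n => ?_, fun h n => sum_mem fun _ _ => hI _ _ (h _)⟩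
  induction n using Nat.strong_induction_on with
  | _ n ih =>
    have split : hmulPS c t n = t n + ∑ i ∈ range n, hmul (c (i + 1)) (t (n - (i + 1))) := by
      rw [hmulPS, sum_range_succ', hc, hmul_one_left, Nat.sub_zero, add_comm]
    have rest : ∑ i ∈ range n, hmul (c (i + 1)) (t (n - (i + 1))) ∈ I :=
      sum_mem fun i hi => hI _ _ (ih _ (by simp at hi; omega))
    simpa [split] using sub_mem (h n) rest

lemma forall_mem_of_seqDeriv_seqDeriv_sub_hmul_mem {I : Submodule ℚ (H M)}
    (hI : ∀ a b : H M, b ∈ I → hmul a b ∈ I) {w : H M} {f : ℕ → H M} (h₀ : f 0 ∈ I)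
    (h₁ : f 1 ∈ I) (h : ∀ n, seqDeriv (seqDeriv f) n - hmul w (f n) ∈ I) (n : ℕ) : f n ∈ I := by
  suffices ∀ n, f n ∈ I ∧ f (n + 1) ∈ I from (this n).1
  intro n
  induction n with
  | zero => exact ⟨h₀, h₁⟩
  | succ n ih =>
    refine ⟨ih.2, ?_⟩
    have h' := add_mem (h n) (hI w _ ih.1)
    rwa [sub_add_cancel, seqDeriv_apply_mem_iff, seqDeriv_apply_mem_iff] at h'

def powersWithZero (z : M) : Set M := insert 0 (Set.range (z ^ ·))

lemma powersWithZero_commute (z : M) :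
    ∀ a ∈ powersWithZero z, ∀ b ∈ powersWithZero z, Commute a b := by
  rintro a (rfl | ⟨i, rfl⟩) b (rfl | ⟨j, rfl⟩)
  exacts [Commute.zero_left _, Commute.zero_left _, Commute.zero_right _,
    Commute.pow_pow_self z i j]

lemma sprod_two_mem_wordSpan (z : M) (n : ℕ) : sprod z 2 n ∈ wordSpan (powersWithZero z) := by
  induction n with
  | zero => exact wrd_mem_wordSpan (l := []) (by simp)
  | succ n ih =>
    rw [sprod, s, pow_one, mul_assoc]
    exact wrd_singleton_mul_mem_wordSpan (Set.mem_insert_of_mem 0 (Set.mem_range_self (n + 1)))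
      (wrd_singleton_mul_mem_wordSpan (Set.mem_insert 0 _) ih)

lemma Scoef_mem_wordSpan (z : M) (n : ℕ) : Scoef z n ∈ wordSpan (powersWithZero z) := by
  unfold Scoef
  split_ifs
  exacts [sprod_two_mem_wordSpan z _, zero_mem _]

lemma Ccoef_mem_wordSpan (z : M) (n : ℕ) : Ccoef z n ∈ wordSpan (powersWithZero z) :=
  Submodule.smul_mem _ _ (Scoef_mem_wordSpan z _)

lemma seqDeriv_Ccoef_mem_wordSpan (z : M) (n : ℕ) :
    seqDeriv (Ccoef z) n ∈ wordSpan (powersWithZero z) :=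
  Submodule.smul_mem _ _ (Ccoef_mem_wordSpan z _)

lemma wz_mem_wordSpan (z : M) (n : ℕ) : wz z n ∈ wordSpan (powersWithZero z) :=
  Submodule.smul_mem _ _ (sprod_two_mem_wordSpan z _)

lemma hmul_wz_left_comm (z : M) (n : ℕ) {f : H M} (hf : f ∈ wordSpan (powersWithZero z))
    (x : H M) : hmul (wz z n) (hmul f x) = hmul f (hmul (wz z n) x) :=
  hmul_left_comm_of_mem_wordSpan (powersWithZero_commute z) (wz_mem_wordSpan z n) hf x

lemma Scoef_zero (z : M) : Scoef z 0 = 0 := rfl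
lemma Scoef_one (z : M) : Scoef z 1 = 1 := rfl
lemma Scoef_two (z : M) : Scoef z 2 = 0 := rfl
lemma Scoef_three (z : M) : Scoef z 3 = sprod z 2 1 := rfl

lemma Ccoef_eq_seqDeriv (z : M) : Ccoef z = seqDeriv (Scoef z) := rfl

lemma Ccoef_zero (z : M) : Ccoef z 0 = 1 := by simp [Ccoef, Scoef_one]

lemma Ccoef_one (z : M) : Ccoef z 1 = 0 := by simp [Ccoef, Scoef_two]

lemma wz_one (z : M) : wz z 1 = (6 : ℚ) • sprod z 2 1 := by
  norm_num [wz, Nat.factorial]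

noncomputable def Tcoef (z : M) : ℕ → H M :=
  seqDeriv (Ccoef z) - fun n => hmul (wz z 1) (Scoef z n)

lemma Tcoef_zero (z : M) : Tcoef z 0 = 0 := by
  simp [Tcoef, seqDeriv_apply, Ccoef_one, Scoef_zero, hmul_zero_right]

lemma Tcoef_one (z : M) : Tcoef z 1 = 0 := by
  simp only [Tcoef, Pi.sub_apply, seqDeriv_apply, Ccoef, Scoef_one, hmul_one_right, wz_one,
    smul_smul]
  norm_num [Scoef_three]

lemma seqDeriv_Tcoef (z : M) :
    seqDeriv (Tcoef z) = seqDeriv (seqDeriv (Ccoef z)) - fun n => hmul (wz z 1) (Ccoef z n) := by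
  rw [Tcoef, map_sub, seqDeriv_hmul_left, ← Ccoef_eq_seqDeriv]

lemma seqDeriv_Pcoef (z : M) (n : ℕ) :
    seqDeriv (Pcoef z) n = (2 : ℚ) • hmulPS (Ccoef z) (Tcoef z) n := by
  have hcomm : ∀ {f g : H M}, f ∈ wordSpan (powersWithZero z) → g ∈ wordSpan (powersWithZero z) →
      hmul f g = hmul g f :=
    hmul_comm_of_mem_wordSpan (powersWithZero_commute z)
  have hP : Pcoef z = (-fun d => hmul (wz z 1) (hmulPS (Scoef z) (Scoef z) d)) +
      hmulPS (Ccoef z) (Ccoef z) := rfl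
  rw [hP, map_add, map_neg, seqDeriv_hmul_left, Pi.add_apply, Pi.neg_apply, seqDeriv_hmulPS,
    seqDeriv_hmulPS, ← Ccoef_eq_seqDeriv,
    hmulPS_comm fun i j => hcomm (Scoef_mem_wordSpan z i) (Ccoef_mem_wordSpan z j),
    hmulPS_comm fun i j => hcomm (seqDeriv_Ccoef_mem_wordSpan z i) (Ccoef_mem_wordSpan z j),
    Tcoef, hmulPS_sub_right, Pi.sub_apply,
    hmul_add_right, hmul_hmulPS fun i => hmul_wz_left_comm z 1 (Ccoef_mem_wordSpan z i)]
  simp only [two_smul, smul_sub]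
  abel

lemma seqDeriv_seqDeriv_Acoef_sub (z : M) (i j : ℕ) :
    seqDeriv (seqDeriv (Acoef z i)) j - hmul (wz z 1) (Acoef z i j) =
      ((i + j).choose i : ℚ) • Tcoef z (i + j) - hmul (Scoef z i) (seqDeriv (Tcoef z) j)
        - hmul (Ccoef z i) (Tcoef z j) := by
  have hA : Acoef z i = (fun j => ((i + j).choose i : ℚ) • Scoef z (i + j))
      - (fun j => hmul (Scoef z i) (Ccoef z j)) - fun j => hmul (Ccoef z i) (Scoef z j) := rfl
  rw [hA, map_sub, map_sub, map_sub, map_sub, seqDeriv_choose_smul_add, seqDeriv_choose_smul_add,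
    seqDeriv_hmul_left, seqDeriv_hmul_left, seqDeriv_hmul_left, seqDeriv_hmul_left,
    seqDeriv_Tcoef, Tcoef, ← Ccoef_eq_seqDeriv]
  simp only [Pi.sub_apply, hmul_sub_right, hmul_smul_right, smul_sub,
    hmul_wz_left_comm z 1 (Scoef_mem_wordSpan z i), hmul_wz_left_comm z 1 (Ccoef_mem_wordSpan z i)]
  abel

lemma Acoef_zero_right (z : M) (i : ℕ) : Acoef z i 0 = 0 := by
  simp [Acoef, Ccoef_zero, Scoef_zero, hmul_one_right, hmul_zero_right]

lemma Acoef_one_right (z : M) (i : ℕ) : Acoef z i 1 = 0 := by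
  rw [Acoef, Ccoef_one, Scoef_one, hmul_zero_right, hmul_one_right, sub_zero,
    Nat.choose_succ_self_right, Ccoef, Nat.cast_succ, sub_self]

lemma forall_Acoef_mem_iff (z : M) {I : Submodule ℚ (H M)}
    (hI : ∀ a b : H M, b ∈ I → hmul a b ∈ I) :
    (∀ i j, Acoef z i j ∈ I) ↔ ∀ n, Tcoef z n ∈ I := by
  constructor
  · intro hA n
    have h := seqDeriv_seqDeriv_Acoef_sub z n 0
    rw [seqDeriv_apply (Tcoef z), Tcoef_zero, Tcoef_one, smul_zero, hmul_zero_right,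
      hmul_zero_right, sub_zero, sub_zero, add_zero, Nat.choose_self, Nat.cast_one, one_smul] at h
    rw [← h]
    exact sub_mem ((seqDeriv_apply_mem_iff I _ 0).2 ((seqDeriv_apply_mem_iff I _ 1).2 (hA n 2)))
      (hI _ _ (hA n 0))
  · intro hT i
    refine forall_mem_of_seqDeriv_seqDeriv_sub_hmul_mem hI (w := wz z 1)
      (Acoef_zero_right z i ▸ zero_mem I) (Acoef_one_right z i ▸ zero_mem I) fun j => ?_
    rw [seqDeriv_seqDeriv_Acoef_sub]
    exact sub_mem (sub_mem (I.smul_mem _ (hT _))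
      (hI _ _ ((seqDeriv_apply_mem_iff I _ j).2 (hT _)))) (hI _ _ (hT j))

lemma forall_Pcoef_sub_mem_iff (z : M) {I : Submodule ℚ (H M)}
    (hI : ∀ a b : H M, b ∈ I → hmul a b ∈ I) :
    (∀ d, Pcoef z d - (if d = 0 then (1 : H M) else 0) ∈ I) ↔ ∀ n, Tcoef z n ∈ I := by
  have hP₀ : Pcoef z 0 = 1 := by
    simp [Pcoef, hmulPS, Scoef_zero, Ccoef_zero, hmul_zero_right, hmul_one_left]
  calc (∀ d, Pcoef z d - (if d = 0 then (1 : H M) else 0) ∈ I)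
      ↔ ∀ n, seqDeriv (Pcoef z) n ∈ I := by
        rw [← Nat.and_forall_add_one]
        simp [hP₀, seqDeriv_apply_mem_iff]
    _ ↔ ∀ n, hmulPS (Ccoef z) (Tcoef z) n ∈ I := by
        simp only [seqDeriv_Pcoef, I.smul_mem_iff (two_ne_zero : (2 : ℚ) ≠ 0)]
    _ ↔ ∀ n, Tcoef z n ∈ I := forall_hmulPS_mem_iff hI (Ccoef_zero z)

/-- For any ideal `I` of `𝔥_{M,∗}`, the modified addition formula holds in
`(𝔥_{M,∗}/I)⟦x,y⟧` iff the modified Pythagorean identity holds in `(𝔥_{M,∗}/I)⟦x⟧`. -/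
theorem addition_iff_pythagorean (M : Type*) [MonoidWithZero M] (z : M)
    (I : Submodule ℚ (H M)) (hI : ∀ a b : H M, b ∈ I → hmul a b ∈ I) :
    (∀ i j : ℕ, Acoef z i j ∈ I) ↔
      (∀ d : ℕ, Pcoef z d - (if d = 0 then (1 : H M) else 0) ∈ I) := by
  rw [forall_Acoef_mem_iff z hI, forall_Pcoef_sub_mem_iff z hI]
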